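/- arXiv:2602.22966 — 3 statements merged into one kernel-verified Lean document; each statement's English description precedes it below -/
import Mathlib

section
/- Let κ, λ, and μ be cardinals with μ < cf(κ). For any map c from λ^{<κ} to μ, there exist η ∈ λ^{<κ} and θ < μ such that for all ν ⊵ η there exists ρ ⊵ ν such that for each i < λ the set {ξ ∈ λ^{<κ} : ξ ⊵ ρ⌢(i) and c(ξ) = θ} is nonempty. -/
/-! Common definitions: trees, tree languages, generalized indiscernibles, tree properties,
and Mekler's construction, following "On Mekler construction of NCTP and NBTP theories". -/

open FirstOrder Language Cardinal Set

universe u v w x y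

namespace Paper

/-! ## Trees of finite sequences (`ω^{<ω}` as `List ℕ`) -/

/-- The longest common initial segment (meet) of two finite sequences. -/
def listMeet : List ℕ → List ℕ → List ℕ
  | a :: as, b :: bs => if a = b then a :: listMeet as bs else []
  | _, _ => []

/-- `η ⊲ ν` : proper initial segment. -/
def ListPPre (η ν : List ℕ) : Prop := η <+: ν ∧ η ≠ ν

/-- `η ⊥ ν` : incomparability. -/
def ListIncomp (η ν : List ℕ) : Prop := ¬ η <+: ν ∧ ¬ ν <+: η

/-- The lexicographic order on `ω^{<ω}`. -/
def ListLex (η ν : List ℕ) : Prop :=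
  ListPPre η ν ∨ (ListIncomp η ν ∧
    η.getD (listMeet η ν).length 0 < ν.getD (listMeet η ν).length 0)

/-- `t(η)` : the last entry of `η`. -/
def lastEntry (η : List ℕ) : ℕ := η.getLastD 0

/-- Step of a left-leaning path: `η⁻⌢(j) ⊲ ν` for some `j ≤ t(η)`. -/
def LeftStep (η ν : List ℕ) : Prop := ∃ j ≤ lastEntry η, ListPPre (η.dropLast ++ [j]) ν

/-- Step of a strict left-leaning path: `η⁻⌢(j) ⊲ ν` for some `j < t(η)`. -/
def SLeftStep (η ν : List ℕ) : Prop := ∃ j < lastEntry η, ListPPre (η.dropLast ++ [j]) ν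

/-- Step of a right-veering path: `η⁻⌢(j) ⊴ ν` for some `j > t(η)`. -/
def RightStep (η ν : List ℕ) : Prop := ∃ j > lastEntry η, (η.dropLast ++ [j]) <+: ν

/-- Step of a strict right-veering path: `η⁻⌢(j) ⊲ ν` for some `j > t(η)`. -/
def SRightStep (η ν : List ℕ) : Prop := ∃ j > lastEntry η, ListPPre (η.dropLast ++ [j]) ν

/-- Step of a direct sibling set: `ν = η⁻⌢(j)` for some `j > t(η)`. -/
def SibStep (η ν : List ℕ) : Prop := ∃ j > lastEntry η, ν = η.dropLast ++ [j]

/-- `X` admits an enumeration `(η_i)` (finite or of order type `ω`) whose consecutive members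
are related by the step relation `S`. -/
def StepEnum {A : Type y} (S : A → A → Prop) (X : Set A) : Prop :=
  (∃ (n : ℕ) (e : Fin n → A), Function.Injective e ∧ Set.range e = X ∧
      ∀ (i : ℕ) (h : i + 1 < n), S (e ⟨i, Nat.lt_of_succ_lt h⟩) (e ⟨i + 1, h⟩)) ∨
  (∃ e : ℕ → A, Function.Injective e ∧ Set.range e = X ∧ ∀ i : ℕ, S (e i) (e (i + 1)))

/-- `X ⊆ ω^{<ω}` is a left-leaning path. -/
def IsLeftLeaning (X : Set (List ℕ)) : Prop := [] ∉ X ∧ StepEnum LeftStep X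

/-- `X ⊆ ω^{<ω}` is a strict left-leaning path. -/
def IsSLeftLeaning (X : Set (List ℕ)) : Prop := [] ∉ X ∧ StepEnum SLeftStep X

/-- `X ⊆ ω^{<ω}` is a right-veering path. -/
def IsRightVeering (X : Set (List ℕ)) : Prop := [] ∉ X ∧ StepEnum RightStep X

/-- `X ⊆ ω^{<ω}` is a strict right-veering path. -/
def IsSRightVeering (X : Set (List ℕ)) : Prop := [] ∉ X ∧ StepEnum SRightStep X

/-- `X ⊆ ω^{<ω}` is a direct sibling set. -/
def IsSibSet (X : Set (List ℕ)) : Prop := [] ∉ X ∧ StepEnum SibStep X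

/-- `μ` is the meet (`⊴`-greatest common lower bound) of the set `S`, with respect to
a prefix relation `pre`. -/
def IsMeetSetG {A : Type y} (pre : A → A → Prop) (S : Set A) (μ : A) : Prop :=
  (∀ η ∈ S, pre μ η) ∧ ∀ ξ : A, (∀ η ∈ S, pre ξ η) → pre ξ μ

/-- An enumeration witnessing that `X` is a descending comb, generic in the prefix relation
`pre` and the lexicographic relation `lex`:  `η_{i+1} <_lex η_i` and
`⋀_{j ≥ i} η_j ⊲ ⋀_{j ≥ i+1} η_j` for all `i`. -/
def DescCombEnumG {A : Type y} (pre lex : A → A → Prop) (X : Set A) : Prop :=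
  (∃ (n : ℕ) (e : Fin n → A), Function.Injective e ∧ Set.range e = X ∧
      (∀ (i : ℕ) (h : i + 1 < n), lex (e ⟨i + 1, h⟩) (e ⟨i, Nat.lt_of_succ_lt h⟩)) ∧
      (∀ (i : ℕ), i + 1 < n → ∀ μ μ' : A,
        IsMeetSetG pre {t | ∃ j : Fin n, i ≤ (j : ℕ) ∧ e j = t} μ →
        IsMeetSetG pre {t | ∃ j : Fin n, i + 1 ≤ (j : ℕ) ∧ e j = t} μ' →
        (pre μ μ' ∧ μ ≠ μ'))) ∨
  (∃ e : ℕ → A, Function.Injective e ∧ Set.range e = X ∧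
      (∀ i : ℕ, lex (e (i + 1)) (e i)) ∧
      (∀ i : ℕ, ∀ μ μ' : A,
        IsMeetSetG pre {t | ∃ j : ℕ, i ≤ j ∧ e j = t} μ →
        IsMeetSetG pre {t | ∃ j : ℕ, i + 1 ≤ j ∧ e j = t} μ' →
        (pre μ μ' ∧ μ ≠ μ')))

/-- `X` is a descending comb: an antichain admitting a descending comb enumeration. -/
def IsDescCombG {A : Type y} (pre lex : A → A → Prop) (X : Set A) : Prop :=
  (∀ η ∈ X, ∀ ν ∈ X, η ≠ ν → ¬ pre η ν ∧ ¬ pre ν η) ∧ DescCombEnumG pre lex X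

/-- Descending combs in `ω^{<ω}`. -/
def IsDescCombL (X : Set (List ℕ)) : Prop := IsDescCombG (· <+: ·) ListLex X

/-! ## Consistency and `k`-inconsistency of instances of a formula -/

/-- An elementary extension of the `L`-structure `M`. -/
structure ElemExt (L : FirstOrder.Language.{u, v}) (M : Type w) [L.Structure M] :
    Type (max u v w + 1) where
  Carrier : Type (max u v w)
  str : L.Structure Carrier
  emb : @FirstOrder.Language.ElementaryEmbedding L M Carrier _ str

attribute [instance] ElemExt.str

variable {L : FirstOrder.Language.{u, v}}

/-- `{φ(x, a_η) : η ∈ X}` is consistent, i.e. realized in some elementary extension of `M`. -/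
def Realizes {M : Type w} [L.Structure M] {n m : ℕ} (φ : L.Formula (Fin n ⊕ Fin m))
    {ι : Type y} (a : ι → Fin m → M) (X : Set ι) : Prop :=
  ∃ (E : ElemExt L M) (xv : Fin n → E.Carrier),
    ∀ η ∈ X, φ.Realize (Sum.elim xv (fun q => E.emb (a η q)))

/-- `{φ(x, a_η) : η ∈ X}` is `k`-inconsistent: no `k`-element subset is realizable in any
elementary extension of `M`. -/
def KIncon {M : Type w} [L.Structure M] {n m : ℕ} (φ : L.Formula (Fin n ⊕ Fin m))
    {ι : Type y} (a : ι → Fin m → M) (X : Set ι) (k : ℕ) : Prop :=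
  ∀ S : Finset ι, ↑S ⊆ X → S.card = k → ¬ Realizes φ a (S : Set ι)

/-! ## Tree properties -/

/-- `T` has CTP: some formula `φ(x, y)` and family `(a_η)_{η ∈ ω^{<ω}}` in a model of `T` are
such that `{φ(x, a_η) : η ∈ X}` is consistent for every descending comb `X` and
`{φ(x, a_{η|n}) : n < ω}` is `k`-inconsistent for every branch `η ∈ ω^ω`. -/
def HasCTP (T : L.Theory) : Prop :=
  ∃ (M : Theory.ModelType.{u, v, max u v} T) (n m : ℕ) (φ : L.Formula (Fin n ⊕ Fin m))
    (a : List ℕ → Fin m → M) (k : ℕ),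
    (∀ X : Set (List ℕ), IsDescCombL X → Realizes φ a X) ∧
    ∀ η : ℕ → ℕ, KIncon φ a {l | ∃ nn : ℕ, l = List.ofFn fun i : Fin nn => η i} k

/-- `T` has BTP: some formula `φ(x, y)` and family `(a_η)_{η ∈ ω^{<ω}}` in a model of `T` are
such that `{φ(x, a_η) : η ∈ X}` is consistent for every left-leaning path `X` and
`k`-inconsistent for every right-veering path `X`. -/
def HasBTP (T : L.Theory) : Prop :=
  ∃ (M : Theory.ModelType.{u, v, max u v} T) (n m : ℕ) (φ : L.Formula (Fin n ⊕ Fin m))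
    (a : List ℕ → Fin m → M) (k : ℕ),
    (∀ X : Set (List ℕ), IsLeftLeaning X → Realizes φ a X) ∧
    (∀ X : Set (List ℕ), IsRightVeering X → KIncon φ a X k)

/-- `T` has the tree property (a theory is simple iff it does not have it). -/
def HasTP (T : L.Theory) : Prop :=
  ∃ (M : Theory.ModelType.{u, v, max u v} T) (n m : ℕ) (φ : L.Formula (Fin n ⊕ Fin m))
    (a : List ℕ → Fin m → M) (k : ℕ),
    (∀ η : ℕ → ℕ, Realizes φ a {l | ∃ nn : ℕ, l = List.ofFn fun i : Fin nn => η i}) ∧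
    (∀ η : List ℕ, KIncon φ a {l | ∃ i : ℕ, l = η ++ [i]} k)

/-! ## The tree languages `L₀` and `L_s` -/

/-- The two binary relation symbols `⊴` and `<_lex` of the tree languages. -/
inductive TreeRel2 : Type
  | pre
  | lex

/-- The language `L₀ = {⊴, <_lex, ∧}`. -/
def L0 : FirstOrder.Language.{0, 0} where
  Functions n := match n with
    | 2 => Unit
    | _ => Empty
  Relations n := match n with
    | 2 => TreeRel2
    | _ => Empty

/-- The language `L_s = {⊴, <_lex, ∧} ∪ {P_i : i < ω}`. -/
def Ls : FirstOrder.Language.{0, 0} where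
  Functions n := match n with
    | 2 => Unit
    | _ => Empty
  Relations n := match n with
    | 1 => ℕ
    | 2 => TreeRel2
    | _ => Empty

/-- The `L_s`-structure on `ω^{<ω}`. -/
instance : Ls.Structure (List ℕ) where
  funMap {n} f v :=
    match n, f with
    | 2, _ => listMeet (v 0) (v 1)
    | 0, f => f.elim
    | 1, f => f.elim
    | (_ + 3), f => f.elim
  RelMap {n} r v :=
    match n, r with
    | 1, i => (v 0).length = i
    | 2, TreeRel2.pre => (v 0) <+: (v 1)
    | 2, TreeRel2.lex => ListLex (v 0) (v 1)
    | 0, r => r.elim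
    | (_ + 3), r => r.elim

/-! ## Generalized indiscernibility -/

/-- Two tuples have the same quantifier-free type in the `L'`-structure `A`. -/
def SameQfType (L' : FirstOrder.Language.{x, y}) (A : Type*) [L'.Structure A] {s : ℕ}
    (ηs νs : Fin s → A) : Prop :=
  ∀ φ : L'.Formula (Fin s), φ.IsQF → (φ.Realize ηs ↔ φ.Realize νs)

/-- The family `a` of `m`-tuples of `M`, indexed by the `L'`-structure `A`, is
`A`-indiscernible: finite index tuples with the same quantifier-free `L'`-type give
tuples with the same type in `M`. -/
def Indisc (L' : FirstOrder.Language.{x, y}) (A : Type*) [L'.Structure A] {M : Type w}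
    [L.Structure M] {m : ℕ} (a : A → Fin m → M) : Prop :=
  ∀ (s : ℕ) (ηs νs : Fin s → A), SameQfType L' A ηs νs →
    ∀ ψ : L.Formula (Fin s × Fin m),
      (ψ.Realize fun p => a (ηs p.1) p.2) ↔ (ψ.Realize fun p => a (νs p.1) p.2)

/-- `b'` realizes (in `N ⪰ M`) the complete type of `b` over the tuple `c` of `M`. -/
def RealizesTypeOver {M : Type w} [L.Structure M] {N : Type x} [L.Structure N]
    (g : M ↪ₑ[L] N) {nb m : ℕ} (b : Fin nb → M) (c : Fin m → M) (b' : Fin nb → N) : Prop :=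
  ∀ φ : L.Formula (Fin nb ⊕ Fin m),
    φ.Realize (Sum.elim b c) ↔ φ.Realize (Sum.elim b' fun q => g (c q))

/-- A sequence of `m`-tuples indexed by `ℕ` is order indiscernible over the tuple `b'`. -/
def OrdIndiscN {N : Type x} [L.Structure N] {nb m : ℕ} (b' : Fin nb → N)
    (c : ℕ → Fin m → N) : Prop :=
  ∀ (s : ℕ) (f g : Fin s → ℕ), StrictMono f → StrictMono g →
    ∀ ψ : L.Formula (Fin nb ⊕ Fin s × Fin m),
      ψ.Realize (Sum.elim b' fun p => c (f p.1) p.2) ↔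
      ψ.Realize (Sum.elim b' fun p => c (g p.1) p.2)

/-- A sequence of `m`-tuples indexed by the ordinals below `κ.ord` is order indiscernible
over the tuple `b'`. -/
def OrdIndiscO (κ : Cardinal.{y}) {N : Type x} [L.Structure N] {nb m : ℕ} (b' : Fin nb → N)
    (c : ∀ j : Ordinal.{y}, j < κ.ord → Fin m → N) : Prop :=
  ∀ (s : ℕ) (f g : Fin s → Ordinal.{y}) (hf : ∀ t, f t < κ.ord) (hg : ∀ t, g t < κ.ord),
    StrictMono f → StrictMono g →
    ∀ ψ : L.Formula (Fin nb ⊕ Fin s × Fin m),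
      ψ.Realize (Sum.elim b' fun p => c (f p.1) (hf p.1) p.2) ↔
      ψ.Realize (Sum.elim b' fun p => c (g p.1) (hg p.1) p.2)

/-! ## The tree `ω^{<κ}` for a cardinal `κ` -/

/-- An element of `ω^{<κ}`: a sequence of natural numbers indexed by the ordinals below some
ordinal `len < κ.ord` (represented as a function `Ordinal → Option ℕ` defined exactly
below `len`). -/
structure OTree (κ : Cardinal.{u}) : Type (u + 1) where
  len : Ordinal.{u}
  len_lt : len < κ.ord
  val : Ordinal.{u} → Option ℕ
  isSome_iff : ∀ β, (val β).isSome ↔ β < len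

/-- `η ⊴ ν` in `ω^{<κ}`. -/
def OPre {κ : Cardinal.{u}} (η ν : OTree κ) : Prop :=
  η.len ≤ ν.len ∧ ∀ β < η.len, η.val β = ν.val β

/-- `η ⊲ ν` in `ω^{<κ}`. -/
def OPPre {κ : Cardinal.{u}} (η ν : OTree κ) : Prop := OPre η ν ∧ η ≠ ν

/-- `η ⊥ ν` in `ω^{<κ}`. -/
def OIncomp {κ : Cardinal.{u}} (η ν : OTree κ) : Prop := ¬ OPre η ν ∧ ¬ OPre ν η

/-- The length of the meet `η ∧ ν`. -/
noncomputable def omeetLen {κ : Cardinal.{u}} (η ν : OTree κ) : Ordinal.{u} :=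
  sInf {β | min η.len ν.len ≤ β ∨ η.val β ≠ ν.val β}

lemma omeetLen_le {κ : Cardinal.{u}} (η ν : OTree κ) :
    omeetLen η ν ≤ min η.len ν.len :=
  csInf_le' (Or.inl le_rfl)

/-- The meet `η ∧ ν` (longest common initial segment) in `ω^{<κ}`. -/
noncomputable def omeet {κ : Cardinal.{u}} (η ν : OTree κ) : OTree κ where
  len := omeetLen η ν
  len_lt := (((omeetLen_le η ν).trans (min_le_left _ _)).trans_lt η.len_lt)
  val β := if β < omeetLen η ν then η.val β else none
  isSome_iff β := by
    show (if β < omeetLen η ν then η.val β else none).isSome ↔ β < omeetLen η ν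
    by_cases h : β < omeetLen η ν
    · rw [if_pos h, η.isSome_iff]
      exact ⟨fun _ => h, fun _ => h.trans_le ((omeetLen_le η ν).trans (min_le_left _ _))⟩
    · rw [if_neg h]
      simp [h]

/-- The lexicographic order on `ω^{<κ}`. -/
noncomputable def OLex {κ : Cardinal.{u}} (η ν : OTree κ) : Prop :=
  OPPre η ν ∨ (OIncomp η ν ∧ ∃ a b : ℕ,
    η.val (omeet η ν).len = some a ∧ ν.val (omeet η ν).len = some b ∧ a < b)

/-- `X ⊆ ω^{<κ}` is a path, i.e. linearly ordered by `⊴`. -/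
def IsPathO {κ : Cardinal.{u}} (X : Set (OTree κ)) : Prop :=
  ∀ η ∈ X, ∀ ν ∈ X, OPre η ν ∨ OPre ν η

/-- Descending combs in `ω^{<κ}`. -/
def IsDescCombO {κ : Cardinal.{u}} (X : Set (OTree κ)) : Prop :=
  IsDescCombG OPre OLex X

/-- The `L₀`-structure on `ω^{<κ}`. -/
noncomputable instance {κ : Cardinal.{u}} : L0.Structure (OTree κ) where
  funMap {n} f v :=
    match n, f with
    | 2, _ => omeet (v 0) (v 1)
    | 0, f => f.elim
    | 1, f => f.elim
    | (_ + 3), f => f.elim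
  RelMap {n} r v :=
    match n, r with
    | 2, TreeRel2.pre => OPre (v 0) (v 1)
    | 2, TreeRel2.lex => OLex (v 0) (v 1)
    | 0, r => r.elim
    | 1, r => r.elim
    | (_ + 3), r => r.elim

/-- The `L_s`-structure on `ω^{<κ}`. -/
noncomputable instance {κ : Cardinal.{u}} : Ls.Structure (OTree κ) where
  funMap {n} f v :=
    match n, f with
    | 2, _ => omeet (v 0) (v 1)
    | 0, f => f.elim
    | 1, f => f.elim
    | (_ + 3), f => f.elim
  RelMap {n} r v :=
    match n, r with
    | 1, i => (v 0).len = ((show ℕ from i) : Ordinal.{u})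
    | 2, TreeRel2.pre => OPre (v 0) (v 1)
    | 2, TreeRel2.lex => OLex (v 0) (v 1)
    | 0, r => r.elim
    | (_ + 3), r => r.elim

lemma add_lt_ord {κ : Cardinal.{u}} (hκ : ℵ₀ ≤ κ) {i j : Ordinal.{u}}
    (hi : i < κ.ord) (hj : j < κ.ord) : i + j < κ.ord := by
  rw [Cardinal.lt_ord] at *
  rw [Ordinal.card_add]
  exact Cardinal.add_lt_of_lt hκ hi hj

lemma one_lt_ord {κ : Cardinal.{u}} (hκ : ℵ₀ ≤ κ) : (1 : Ordinal.{u}) < κ.ord := by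
  rw [Cardinal.lt_ord]
  simpa using lt_of_lt_of_le Cardinal.one_lt_aleph0 hκ

lemma aleph0_le_of_big {c κ : Cardinal.{u}} (h : 2 ^ (c + ℵ₀) < κ) : ℵ₀ ≤ κ := by
  refine le_of_lt (lt_of_le_of_lt ?_ h)
  calc ℵ₀ ≤ 2 ^ ℵ₀ := (Cardinal.cantor ℵ₀).le
  _ ≤ 2 ^ (c + ℵ₀) := Cardinal.power_le_power_left two_ne_zero le_add_self

/-- The element of `ω^{<κ}` of length `l` whose entry at `β < l` is `v β`. -/
noncomputable def oseq (κ : Cardinal.{u}) (l : Ordinal.{u}) (hl : l < κ.ord)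
    (v : Ordinal.{u} → ℕ) : OTree κ where
  len := l
  len_lt := hl
  val β := if β < l then some (v β) else none
  isSome_iff β := by by_cases h : β < l <;> simp [h]

/-- The element `0^i ⌢ (1)` of `ω^{<κ}`. -/
noncomputable def node1 {κ : Cardinal.{u}} (hκ : ℵ₀ ≤ κ) (i : Ordinal.{u})
    (hi : i < κ.ord) : OTree κ :=
  oseq κ (i + 1) (add_lt_ord hκ hi (one_lt_ord hκ)) fun β => if β = i then 1 else 0

/-- The element `0^i ⌢ (1) ⌢ 0^j` of `ω^{<κ}`. -/
noncomputable def node10 {κ : Cardinal.{u}} (hκ : ℵ₀ ≤ κ) (i : Ordinal.{u}) (hi : i < κ.ord)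
    (j : Ordinal.{u}) (hj : j < κ.ord) : OTree κ :=
  oseq κ (i + 1 + j) (add_lt_ord hκ (add_lt_ord hκ hi (one_lt_ord hκ)) hj)
    fun β => if β = i then 1 else 0

/-- The element `0^i ⌢ (j+1)` of `ω^{<κ}`. -/
noncomputable def nodeJ1 {κ : Cardinal.{u}} (hκ : ℵ₀ ≤ κ) (i : Ordinal.{u}) (hi : i < κ.ord)
    (j : ℕ) : OTree κ :=
  oseq κ (i + 1) (add_lt_ord hκ hi (one_lt_ord hκ)) fun β => if β = i then j + 1 else 0

/-- The element `0^i ⌢ (2)^j ⌢ (1)` of `ω^{<κ}`. -/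
noncomputable def node2J1 {κ : Cardinal.{u}} (hκ : ℵ₀ ≤ κ) (i : Ordinal.{u}) (hi : i < κ.ord)
    (j : Ordinal.{u}) (hj : j < κ.ord) : OTree κ :=
  oseq κ (i + j + 1) (add_lt_ord hκ (add_lt_ord hκ hi hj) (one_lt_ord hκ))
    fun β => if β < i then 0 else if β < i + j then 2 else 1

/-! ## Level-`s`-indiscernibility -/

/-- The member of `ω^{<ω}|_{range x}` with length `x k` whose entry at the position `x t`
(for `t < k`) is `v t`, and `0` at the other positions below `x k`. -/
noncomputable def buildL {r : ℕ} (x : Fin r → ℕ) (k : Fin r) (v : Fin r → ℕ) : List ℕ :=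
  List.ofFn fun j : Fin (x k) =>
    if h : ∃ t : Fin r, t < k ∧ x t = (j : ℕ) then v h.choose else 0

/-- The member of `ω^{<κ}|_{range x}` with length `x k` whose entry at the position `x t`
(for `t < k`) is `v t`, and `0` at the other positions below `x k`. -/
noncomputable def buildO (κ : Cardinal.{u}) {r : ℕ} (x : Fin r → Ordinal.{u})
    (hx : ∀ t, x t < κ.ord) (k : Fin r) (v : Fin r → ℕ) : OTree κ :=
  oseq κ (x k) (hx k)
    fun β => if h : ∃ t : Fin r, t < k ∧ x t = β then v h.choose else 0

/-- A family indexed by `ω^{<ω}` is level-`s`-indiscernible: it is `s`-indiscernible, and for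
all finite `X, Y ⊆ ω` with `|X| = |Y|` the families indexed by `ω^{<ω}|_X` and `ω^{<ω}|_Y`
have the same type, matched via the bijection induced by the order isomorphism `X → Y`. -/
def LevelSIndiscL {M : Type w} [L.Structure M] {m : ℕ} (a : List ℕ → Fin m → M) : Prop :=
  Indisc (L := L) Ls (List ℕ) a ∧
  ∀ (r : ℕ) (x y : Fin r → ℕ), StrictMono x → StrictMono y →
    ∀ (s : ℕ) (ks : Fin s → Fin r) (vs : Fin s → Fin r → ℕ)
      (ψ : L.Formula (Fin s × Fin m)),
      (ψ.Realize fun p => a (buildL x (ks p.1) (vs p.1)) p.2) ↔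
      (ψ.Realize fun p => a (buildL y (ks p.1) (vs p.1)) p.2)

/-- A family indexed by `ω^{<κ}` is level-`s`-indiscernible. -/
def LevelSIndiscO {κ : Cardinal.{y}} {M : Type w} [L.Structure M] {m : ℕ}
    (a : OTree κ → Fin m → M) : Prop :=
  Indisc (L := L) Ls (OTree κ) a ∧
  ∀ (r : ℕ) (x y : Fin r → Ordinal.{y}) (hx : ∀ t, x t < κ.ord) (hy : ∀ t, y t < κ.ord),
    StrictMono x → StrictMono y →
    ∀ (s : ℕ) (ks : Fin s → Fin r) (vs : Fin s → Fin r → ℕ)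
      (ψ : L.Formula (Fin s × Fin m)),
      (ψ.Realize fun p => a (buildO κ x hx (ks p.1) (vs p.1)) p.2) ↔
      (ψ.Realize fun p => a (buildO κ y hy (ks p.1) (vs p.1)) p.2)

/-! ## `λ^{<κ}` : sequences with values in a cardinal `lam` -/

/-- An element of `lam^{<κ}`: a sequence of ordinals `< lam.ord` indexed by the ordinals below
some ordinal `len < κ.ord`. -/
structure OTreeV (κ lam : Cardinal.{u}) : Type (u + 1) where
  len : Ordinal.{u}
  len_lt : len < κ.ord
  val : Ordinal.{u} → Option Ordinal.{u}
  isSome_iff : ∀ β, (val β).isSome ↔ β < len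
  val_lt : ∀ β c, val β = some c → c < lam.ord

/-- `η ⊴ ν` in `lam^{<κ}`. -/
def OVPre {κ lam : Cardinal.{u}} (η ν : OTreeV κ lam) : Prop :=
  η.len ≤ ν.len ∧ ∀ β < η.len, η.val β = ν.val β

/-- `ξ ⊵ ρ ⌢ (i)`: `ξ` extends `ρ` and its entry at the position `ρ.len` is `i`. -/
def OVExtWith {κ lam : Cardinal.{u}} (ρ : OTreeV κ lam) (i : Ordinal.{u})
    (ξ : OTreeV κ lam) : Prop :=
  OVPre ρ ξ ∧ ξ.val ρ.len = some i

/-! ## The map `f` of the weak-BTP lemma -/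

/-- Auxiliary recursion (on reversed sequences) for `fM`. -/
def fMaux : List ℕ → List ℕ
  | [] => [1]
  | [m] => [0, 2 * m + 1]
  | m :: t :: rest => (fMaux (t :: rest)).dropLast ++ [2 * t, 2 * m + 1]

/-- The map `f : ω^{<ω} → ω^{<ω}` with `f(∅) = (1)`, `f((m)) = (0)⌢(2m+1)` and
`f(η⌢(m)) = f(η)⁻⌢(2t(η))⌢(2m+1)` for nonempty `η`. -/
def fM (η : List ℕ) : List ℕ := fMaux η.reverse

/-! ## Mekler's construction -/

/-- A nice graph: at least two vertices; for any two distinct vertices `a`, `b` there is a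
vertex `c ∉ {a, b}` adjacent to `a` and not to `b`; and no cycles of length `3` or `4`. -/
def IsNiceGraph {V : Type y} (G : SimpleGraph V) : Prop :=
  (∃ a b : V, a ≠ b) ∧
  (∀ a b : V, a ≠ b → ∃ c : V, c ≠ a ∧ c ≠ b ∧ G.Adj c a ∧ ¬ G.Adj c b) ∧
  (¬ ∃ a b c : V, a ≠ b ∧ b ≠ c ∧ a ≠ c ∧ G.Adj a b ∧ G.Adj b c ∧ G.Adj c a) ∧
  (¬ ∃ a b c d : V, a ≠ b ∧ a ≠ c ∧ a ≠ d ∧ b ≠ c ∧ b ≠ d ∧ c ≠ d ∧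
      G.Adj a b ∧ G.Adj b c ∧ G.Adj c d ∧ G.Adj d a)

open scoped commutatorElement in
/-- The relations presenting the Mekler group of a graph on `ℕ`: `w^p` for every word `w`
(exponent `p`), `[[u,v],w]` for all words (2-nilpotency), and `[x_i, x_j]` for adjacent
vertices `i`, `j`. -/
def meklerRels (p : ℕ) (G : SimpleGraph ℕ) : Set (FreeGroup ℕ) :=
  {w | ∃ u : FreeGroup ℕ, w = u ^ p} ∪
  {w | ∃ u v t : FreeGroup ℕ, w = ⁅⁅u, v⁆, t⁆} ∪
  {w | ∃ i j : ℕ, G.Adj i j ∧ w = ⁅FreeGroup.of i, FreeGroup.of j⁆}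

/-- The Mekler group `G_p(C)` of a graph `C` on the vertex set `ℕ`: the group presented by
the generators `x_i` (`i < ω`) subject to the relations `meklerRels`. -/
def MeklerGroup (p : ℕ) (G : SimpleGraph ℕ) : Type :=
  PresentedGroup (meklerRels p G)

instance (p : ℕ) (G : SimpleGraph ℕ) : Group (MeklerGroup p G) :=
  inferInstanceAs (Group (PresentedGroup (meklerRels p G)))

/-- The language of groups. -/
def grpLang : FirstOrder.Language.{0, 0} where
  Functions n := match n with
    | 0 => Unit
    | 1 => Unit
    | 2 => Unit
    | _ => Empty
  Relations _ := Empty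

/-- The `grpLang`-structure on a group. -/
instance grpStructure (G : Type y) [Group G] : grpLang.Structure G where
  funMap {n} f v :=
    match n, f with
    | 0, _ => 1
    | 1, _ => (v 0)⁻¹
    | 2, _ => v 0 * v 1
    | (_ + 3), f => f.elim
  RelMap := fun {_} r => r.elim

/-! ## The trees `𝒯_α` -/

/-- An element of `𝒯_α`: a finitely supported function `η : [start, α) → ω`, where
`start < α` is a non-limit ordinal. -/
structure Tcal (α : Ordinal.{u}) : Type (u + 1) where
  start : Ordinal.{u}
  start_lt : start < α
  start_nl : ¬ Order.IsSuccLimit start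
  val : Ordinal.{u} → Option ℕ
  isSome_iff : ∀ γ, (val γ).isSome ↔ (start ≤ γ ∧ γ < α)
  finsupp : {γ : Ordinal.{u} | val γ ≠ none ∧ val γ ≠ some 0}.Finite

/-- `η ⊴ ν` in `𝒯_α`, i.e. `η ⊆ ν` as functions. -/
def TPre {α : Ordinal.{u}} (η ν : Tcal α) : Prop :=
  ∀ γ a, η.val γ = some a → ν.val γ = some a

/-- `η ⊲ ν` in `𝒯_α`. -/
def TPPre {α : Ordinal.{u}} (η ν : Tcal α) : Prop := TPre η ν ∧ η ≠ ν

/-- `η ⊥ ν` in `𝒯_α`. -/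
def TIncomp {α : Ordinal.{u}} (η ν : Tcal α) : Prop := ¬ TPre η ν ∧ ¬ TPre ν η

/-- The set of possible starting points of common restrictions of `η` and `ν` that agree with
both of them from that point on. -/
def tmeetSet {α : Ordinal.{u}} (η ν : Tcal α) : Set Ordinal.{u} :=
  {β | ¬ Order.IsSuccLimit β ∧ η.start ≤ β ∧ ν.start ≤ β ∧ β < α ∧ ∀ γ, β ≤ γ → η.val γ = ν.val γ}

open Classical in
/-- The meet `η ∧ ν` (the `⊴`-largest common restriction) in `𝒯_α` (with junk value `η` in
the degenerate case where no common restriction exists). -/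
noncomputable def tmeet {α : Ordinal.{u}} (η ν : Tcal α) : Tcal α :=
  if h : (tmeetSet η ν).Nonempty then
    { start := sInf (tmeetSet η ν)
      start_lt := (csInf_mem h).2.2.2.1
      start_nl := (csInf_mem h).1
      val := fun γ => if sInf (tmeetSet η ν) ≤ γ then η.val γ else none
      isSome_iff := by
        intro γ
        show (if sInf (tmeetSet η ν) ≤ γ then η.val γ else none).isSome ↔ _
        by_cases hγ : sInf (tmeetSet η ν) ≤ γ
        · rw [if_pos hγ, η.isSome_iff]
          have h1 : η.start ≤ γ := le_trans (csInf_mem h).2.1 hγ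
          exact ⟨fun h2 => ⟨hγ, h2.2⟩, fun h2 => ⟨h1, h2.2⟩⟩
        · rw [if_neg hγ]
          simp [hγ]
      finsupp := by
        apply η.finsupp.subset
        intro γ hγ
        simp only [Set.mem_setOf_eq] at hγ ⊢
        by_cases h2 : sInf (tmeetSet η ν) ≤ γ
        · rw [if_pos h2] at hγ; exact hγ
        · rw [if_neg h2] at hγ; simp at hγ }
  else η

/-- The lexicographic order on `𝒯_α`: `η <_lex ν` iff `η ⊲ ν`, or `η ⊥ ν` and `η(δ) < ν(δ)`
where `δ` is the largest ordinal at which `η` and `ν` are both defined and disagree. -/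
def TLex {α : Ordinal.{u}} (η ν : Tcal α) : Prop :=
  TPPre η ν ∨ (TIncomp η ν ∧ ∃ (δ : Ordinal.{u}) (a b : ℕ),
    η.val δ = some a ∧ ν.val δ = some b ∧ a < b ∧
    ∀ γ, δ < γ → η.val γ = ν.val γ)

/-- The `L_s`-structure on `𝒯_α`. -/
noncomputable instance {α : Ordinal.{u}} : Ls.Structure (Tcal α) where
  funMap {n} f v :=
    match n, f with
    | 2, _ => tmeet (v 0) (v 1)
    | 0, f => f.elim
    | 1, f => f.elim
    | (_ + 3), f => f.elim
  RelMap {n} r v :=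
    match n, r with
    | 1, i => (v 0).start = ((show ℕ from i) : Ordinal.{u})
    | 2, TreeRel2.pre => TPre (v 0) (v 1)
    | 2, TreeRel2.lex => TLex (v 0) (v 1)
    | 0, r => r.elim
    | (_ + 3), r => r.elim

/-- The member of `𝒯_α|_{range x}` with `start = x k`, whose value at position `x t`
(for `t ≥ k`) is `v t`, and `0` at the other positions of `[x k, α)`. -/
noncomputable def buildT (α : Ordinal.{u}) {r : ℕ} (x : Fin r → Ordinal.{u})
    (hx : ∀ t, x t < α) (hnl : ∀ t, ¬ Order.IsSuccLimit (x t)) (k : Fin r) (v : Fin r → ℕ) :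
    Tcal α where
  start := x k
  start_lt := hx k
  start_nl := hnl k
  val γ :=
    if x k ≤ γ ∧ γ < α then
      (if h : ∃ t : Fin r, k ≤ t ∧ x t = γ then some (v h.choose) else some 0)
    else none
  isSome_iff := by
    intro γ
    show (if x k ≤ γ ∧ γ < α then _ else none).isSome ↔ _
    by_cases h : x k ≤ γ ∧ γ < α
    · rw [if_pos h]
      refine ⟨fun _ => h, fun _ => ?_⟩
      by_cases h2 : ∃ t : Fin r, k ≤ t ∧ x t = γ
      · rw [dif_pos h2]; rfl
      · rw [dif_neg h2]; rfl
    · rw [if_neg h]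
      simpa using h
  finsupp := by
    apply (Set.finite_range x).subset
    intro γ hγ
    simp only [Set.mem_setOf_eq] at hγ
    obtain ⟨h1, h2⟩ := hγ
    by_cases h : x k ≤ γ ∧ γ < α
    · rw [if_pos h] at h1 h2
      by_cases h3 : ∃ t : Fin r, k ≤ t ∧ x t = γ
      · exact ⟨h3.choose, h3.choose_spec.2⟩
      · rw [dif_neg h3] at h2
        exact absurd rfl h2
    · rw [if_neg h] at h1
      exact absurd rfl h1

lemma not_isLimit_of_lt_omega0 {o : Ordinal.{u}} (h : o < Ordinal.omega0) : ¬ Order.IsSuccLimit o :=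
  fun hl => absurd (Ordinal.omega0_le_of_isSuccLimit hl) (not_le.2 h)

/-- A family indexed by `𝒯_α` is level-`s`-indiscernible: it is `s`-indiscernible and for all
finite `X, Y ⊆ ¬lim(α)` with `|X| = |Y|` the families indexed by `𝒯_α|_X` and `𝒯_α|_Y` have
the same type, matched via the isomorphism induced by the order isomorphism `X → Y`. -/
def LevelSIndiscT {α : Ordinal.{y}} {M : Type w} [L.Structure M] {m : ℕ}
    (c : Tcal α → Fin m → M) : Prop :=
  Indisc (L := L) Ls (Tcal α) c ∧
  ∀ (r : ℕ) (x y : Fin r → Ordinal.{y}) (hx : ∀ t, x t < α) (hy : ∀ t, y t < α)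
    (hxnl : ∀ t, ¬ Order.IsSuccLimit (x t)) (hynl : ∀ t, ¬ Order.IsSuccLimit (y t)),
    StrictMono x → StrictMono y →
    ∀ (s : ℕ) (ks : Fin s → Fin r) (vs : Fin s → Fin r → ℕ)
      (ψ : L.Formula (Fin s × Fin m)),
      (ψ.Realize fun p => c (buildT α x hx hxnl (ks p.1) (vs p.1)) p.2) ↔
      (ψ.Realize fun p => c (buildT α y hy hynl (ks p.1) (vs p.1)) p.2)

/-- `ℶ_o(c)`: the `o`-th iterate of cardinal exponentiation starting at `c`. -/
noncomputable def bethFrom (c : Cardinal.{u}) (o : Ordinal.{u}) : Cardinal.{u} :=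
  Ordinal.limitRecOn o c (fun _ ih => 2 ^ ih) fun a _ IH => ⨆ b : Iio a, IH b.1 b.2


section S1aux
variable {κ lam : Cardinal.{u}}


lemma ovpre_refl (η : OTreeV κ lam) : OVPre η η := ⟨le_rfl, fun _ _ => rfl⟩

lemma ovpre_trans {a b c : OTreeV κ lam} (h1 : OVPre a b) (h2 : OVPre b c) : OVPre a c :=
  ⟨h1.1.trans h2.1, fun β hβ => (h1.2 β hβ).trans (h2.2 β (hβ.trans_le h1.1))⟩

/-- The supremum of lengths of `g a` for `a < θ`. -/
noncomputable def unionLen (g : Ordinal.{u} → OTreeV κ lam) (θ : Ordinal.{u}) : Ordinal.{u} :=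
  ⨆ x : θ.ToType, (g ((Ordinal.ToType.mk (o := θ)).symm x).1).len

lemma len_le_unionLen (g : Ordinal.{u} → OTreeV κ lam) {θ a : Ordinal.{u}} (ha : a < θ) :
    (g a).len ≤ unionLen g θ := by
  have := le_ciSup (Ordinal.bddAbove_range
    (fun x : θ.ToType => (g ((Ordinal.ToType.mk (o := θ)).symm x).1).len))
    ((Ordinal.ToType.mk (o := θ)) ⟨a, ha⟩)
  simpa [unionLen] using this

lemma lt_unionLen_iff (g : Ordinal.{u} → OTreeV κ lam) {θ β : Ordinal.{u}} :
    β < unionLen g θ ↔ ∃ a, a < θ ∧ β < (g a).len := by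
  rw [unionLen, Ordinal.lt_iSup_iff]
  constructor
  · rintro ⟨x, hx⟩
    exact ⟨((Ordinal.ToType.mk (o := θ)).symm x).1, ((Ordinal.ToType.mk (o := θ)).symm x).2, hx⟩
  · rintro ⟨a, ha, hβ⟩
    refine ⟨(Ordinal.ToType.mk (o := θ)) ⟨a, ha⟩, ?_⟩
    simpa using hβ

lemma unionLen_lt (g : Ordinal.{u} → OTreeV κ lam) {θ : Ordinal.{u}}
    (hθ : θ.card < κ.ord.cof) : unionLen g θ < κ.ord := by
  refine Ordinal.iSup_lt_ord ?_ fun x => (g _).len_lt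
  rwa [Cardinal.mk_toType]

open Classical in
/-- The union of the chain `g a`, `a < θ`. -/
noncomputable def unionT (g : Ordinal.{u} → OTreeV κ lam) (θ : Ordinal.{u})
    (hlen : unionLen g θ < κ.ord) : OTreeV κ lam where
  len := unionLen g θ
  len_lt := hlen
  val β := if h : ∃ a, a < θ ∧ β < (g a).len then (g h.choose).val β else none
  isSome_iff β := by
    by_cases h : ∃ a, a < θ ∧ β < (g a).len
    · simp only [dif_pos h, (g h.choose).isSome_iff]
      constructor
      · intro _
        exact (lt_unionLen_iff g).2 h
      · intro _
        exact h.choose_spec.2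
    · simp only [dif_neg h]
      simp only [Option.isSome_none, Bool.false_eq_true, false_iff]
      intro hβ
      exact h ((lt_unionLen_iff g).1 hβ)
  val_lt β c hc := by
    by_cases h : ∃ a, a < θ ∧ β < (g a).len
    · simp only [dif_pos h] at hc
      exact (g h.choose).val_lt β c hc
    · simp only [dif_neg h] at hc
      exact absurd hc (by simp)

lemma unionT_pre (g : Ordinal.{u} → OTreeV κ lam) (θ : Ordinal.{u})
    (hlen : unionLen g θ < κ.ord)
    (hchain : ∀ a, a < θ → ∀ b, b < θ → a ≤ b → OVPre (g a) (g b))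
    {a : Ordinal.{u}} (ha : a < θ) : OVPre (g a) (unionT g θ hlen) := by
  classical
  refine ⟨len_le_unionLen g ha, fun β hβ => ?_⟩
  have h : ∃ a', a' < θ ∧ β < (g a').len := ⟨a, ha, hβ⟩
  show _ = dite _ _ _
  rw [dif_pos h]
  rcases le_total a h.choose with hle | hle
  · exact (hchain a ha h.choose h.choose_spec.1 hle).2 β hβ
  · exact ((hchain h.choose h.choose_spec.1 a ha hle).2 β h.choose_spec.2).symm


/-- `ν ⌢ (i)`. -/
noncomputable def appendT (hκ : ℵ₀ ≤ κ) (ν : OTreeV κ lam) (i : Ordinal.{u})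
    (hi : i < lam.ord) : OTreeV κ lam where
  len := ν.len + 1
  len_lt := add_lt_ord hκ ν.len_lt (one_lt_ord hκ)
  val β := if β = ν.len then some i else ν.val β
  isSome_iff β := by
    have hs : β < ν.len + 1 ↔ β ≤ ν.len := by
      rw [Ordinal.add_one_eq_succ, Order.lt_succ_iff]
    rcases eq_or_ne β ν.len with rfl | h
    · simp [hs]
    · simp only [if_neg h, ν.isSome_iff, hs]
      exact ⟨le_of_lt, fun hle => lt_of_le_of_ne hle h⟩
  val_lt β d hd := by
    rcases eq_or_ne β ν.len with rfl | h
    · have h2 : i = d := by simpa using hd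
      exact h2 ▸ hi
    · simp only [if_neg h] at hd
      exact ν.val_lt β d hd

lemma appendT_pre (hκ : ℵ₀ ≤ κ) (ν : OTreeV κ lam) (i : Ordinal.{u}) (hi : i < lam.ord) :
    OVPre ν (appendT hκ ν i hi) := by
  refine ⟨le_self_add , fun β hβ => ?_⟩
  show _ = if β = ν.len then _ else _
  rw [if_neg (ne_of_lt hβ)]

lemma appendT_val (hκ : ℵ₀ ≤ κ) (ν : OTreeV κ lam) (i : Ordinal.{u}) (hi : i < lam.ord) :
    (appendT hκ ν i hi).val ν.len = some i := if_pos rfl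

end S1aux

/-- For cardinals `κ, λ, μ` with `μ < cf(κ)` and any coloring
`c : λ^{<κ} → μ`, there are `η` and `θ < μ` such that for all `ν ⊵ η` there is `ρ ⊵ ν`
such that for each `i < λ`, some `ξ ⊵ ρ⌢(i)` has `c ξ = θ`. -/
theorem statement_1 (κ lam mu : Cardinal.{u}) (hmu : mu < κ.ord.cof)
    (c : OTreeV κ lam → Ordinal.{u}) (hc : ∀ ξ, c ξ < mu.ord) :
    ∃ (η : OTreeV κ lam) (θ : Ordinal.{u}), θ < mu.ord ∧
      ∀ ν : OTreeV κ lam, OVPre η ν →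
        ∃ ρ : OTreeV κ lam, OVPre ν ρ ∧
          ∀ i : Ordinal.{u}, i < lam.ord →
            ∃ ξ : OTreeV κ lam, OVExtWith ρ i ξ ∧ c ξ = θ := by
  classical
  -- κ.ord ≠ 0
  have hκ0 : (0 : Ordinal.{u}) < κ.ord := by
    rcases eq_zero_or_pos κ.ord with h | h
    · rw [h, Ordinal.cof_zero] at hmu
      exact absurd hmu (Cardinal.zero_le mu).not_gt
    · exact h
  -- the root
  let root : OTreeV κ lam :=
    ⟨0, hκ0, fun _ => none, by simp, by simp⟩
  have hmu0 : (0 : Ordinal.{u}) < mu.ord := zero_le.trans_lt (hc root)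
  -- κ.ord is a limit ordinal, so ℵ₀ ≤ κ
  have hκ : ℵ₀ ≤ κ := by
    rcases Ordinal.zero_or_succ_or_isSuccLimit κ.ord with h | ⟨o, h⟩ | h
    · exact absurd h hκ0.ne'
    · rw [← h, Ordinal.cof_succ, Cardinal.lt_one_iff_zero] at hmu
      rw [hmu] at hmu0
      simp at hmu0
    · have := Ordinal.omega0_le_of_isSuccLimit h
      calc ℵ₀ = Ordinal.omega0.card := Ordinal.card_omega0.symm
        _ ≤ κ.ord.card := Ordinal.card_le_card this
        _ = κ := Cardinal.card_ord κ
  by_contra hcon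
  push_neg at hcon
  -- the one-step extension
  have hstep : ∀ η : OTreeV κ lam, ∀ θ < mu.ord,
      ∃ ρ : OTreeV κ lam, OVPre η ρ ∧ ∀ ξ, OVPre ρ ξ → c ξ ≠ θ := by
    intro η θ hθ
    obtain ⟨ν, hν, H⟩ := hcon η θ hθ
    obtain ⟨i, hi, hbad⟩ := H ν (ovpre_refl ν)
    refine ⟨appendT hκ ν i hi, ovpre_trans hν (appendT_pre hκ ν i hi), fun ξ hξ => ?_⟩
    refine hbad ξ ⟨ovpre_trans (appendT_pre hκ ν i hi) hξ, ?_⟩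
    rw [← hξ.2 ν.len ?_, appendT_val]
    show ν.len < ν.len + 1
    rw [Ordinal.add_one_eq_succ]
    exact Order.lt_succ ν.len
  -- the recursion
  let F : Ordinal.{u} → (Ordinal.{u} → OTreeV κ lam) → OTreeV κ lam := fun θ r =>
    if h : ∃ x : OTreeV κ lam, (∀ a, a < θ → OVPre (r a) x) ∧
        (θ < mu.ord → ∀ ξ, OVPre x ξ → c ξ ≠ θ) then h.choose else root
  let g : Ordinal.{u} → OTreeV κ lam :=
    Ordinal.lt_wf.fix (fun θ r => F θ (fun a => if h : a < θ then r a h else root))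
  have hg : ∀ θ, g θ = F θ (fun a => if h : a < θ then g a else root) := by
    intro θ
    show Ordinal.lt_wf.fix _ θ = _
    rw [WellFounded.fix_eq]
  have key : ∀ θ, θ < mu.ord →
      (∀ a, a < θ → OVPre (g a) (g θ)) ∧ (∀ ξ, OVPre (g θ) ξ → c ξ ≠ θ) := by
    intro θ
    induction θ using Ordinal.induction with
    | h θ IH =>
      intro hθ
      have hchain : ∀ a, a < θ → ∀ b, b < θ → a ≤ b → OVPre (g a) (g b) := by
        intro a ha b hb hab
        rcases eq_or_lt_of_le hab with rfl | hab
        · exact ovpre_refl _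
        · exact (IH b hb (hb.trans hθ)).1 a hab
      have hlen : unionLen g θ < κ.ord :=
        unionLen_lt g (lt_trans (Cardinal.lt_ord.mp hθ) hmu)
      obtain ⟨ρ, hρ1, hρ2⟩ := hstep (unionT g θ hlen) θ hθ
      have hex : ∃ x : OTreeV κ lam,
          (∀ a, a < θ → OVPre ((fun a => if h : a < θ then g a else root) a) x) ∧
          (θ < mu.ord → ∀ ξ, OVPre x ξ → c ξ ≠ θ) := by
        refine ⟨ρ, fun a ha => ?_, fun _ => hρ2⟩
        simp only [dif_pos ha]
        exact ovpre_trans (unionT_pre g θ hlen hchain ha) hρ1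
      have hgθ : g θ = hex.choose := by
        rw [hg θ]
        exact dif_pos hex
      constructor
      · intro a ha
        have := hex.choose_spec.1 a ha
        simp only [dif_pos ha] at this
        rw [hgθ]
        exact this
      · intro ξ hξ
        rw [hgθ] at hξ
        exact hex.choose_spec.2 hθ ξ hξ
  -- the final union
  have hchain : ∀ a, a < mu.ord → ∀ b, b < mu.ord → a ≤ b → OVPre (g a) (g b) := by
    intro a ha b hb hab
    rcases eq_or_lt_of_le hab with rfl | hab
    · exact ovpre_refl _
    · exact (key b hb).1 a hab
  have hlen : unionLen g mu.ord < κ.ord := by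
    refine unionLen_lt g ?_
    rw [Cardinal.card_ord]
    exact hmu
  set U := unionT g mu.ord hlen with hU
  have : ∀ θ, θ < mu.ord → c U ≠ θ := fun θ hθ =>
    (key θ hθ).2 U (unionT_pre g mu.ord hlen hchain hθ)
  exact this (c U) (hc U) rfl


end Paper
end

section
/- A complete first-order theory T has BTP if and only if there exist a formula φ(x,y), a model of T containing a family (a_η)_{η∈ω^{<ω}}, and k < ω such that: (i) {φ(x,a_η) : η ∈ X} is consistent for every strict left-leaning path X; (ii) {φ(x,a_η) : η ∈ X} is k-inconsistent for every strict right-veering path X; and (iii) {φ(x,a_η) : η ∈ X} is k-inconsistent for every direct sibling set X. -/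
/-! Common definitions: trees, tree languages, generalized indiscernibles, tree properties,
and Mekler's construction, following "On Mekler construction of NCTP and NBTP theories". -/

open FirstOrder Language Cardinal Set

universe u v w x y

namespace Paper

variable {L : FirstOrder.Language.{u, v}}

-- basic list helpers
lemma lastEntry_concat (η : List ℕ) (j : ℕ) : lastEntry (η ++ [j]) = j := by
  simp [lastEntry]

lemma ppre_length {ρ ν : List ℕ} (h : ListPPre ρ ν) : ρ.length < ν.length := by
  rcases h with ⟨h1, h2⟩
  rcases lt_or_eq_of_le h1.length_le with h | h
  · exact h
  · exact absurd (h1.eq_of_length h) h2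

lemma length_le_dropLast_succ (η : List ℕ) : η.length ≤ η.dropLast.length + 1 := by
  cases η <;> simp [Nat.succ_le_succ, Nat.sub_le]

lemma self_eq_dropLast_concat {η : List ℕ} (h : η ≠ []) :
    η = η.dropLast ++ [lastEntry η] := by
  conv_lhs => rw [← List.dropLast_append_getLast h]
  rw [lastEntry, List.getLastD_eq_getLast?, List.getLast?_eq_getLast h]
  rfl

lemma ppre_dropLast {ρ ν : List ℕ} (h : ListPPre ρ ν) : ρ <+: ν.dropLast := by
  obtain ⟨τ, rfl⟩ := h.1
  rcases τ.eq_nil_or_concat with rfl | ⟨τ', m, rfl⟩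
  · exact absurd (by simp) h.2
  · rw [List.concat_eq_append, ← List.append_assoc, List.dropLast_concat]
    exact ⟨τ', rfl⟩

-- fM lemmas
lemma length_fM (η : List ℕ) : (fM η).length = η.length + 1 := by
  rw [fM, ← List.length_reverse (as := η)]
  generalize η.reverse = l
  induction l with
  | nil => simp [fMaux]
  | cons m t ih =>
    cases t with
    | nil => simp [fMaux]
    | cons b rest => simp [fMaux] at ih ⊢; omega

lemma fM_ne_nil (η : List ℕ) : fM η ≠ [] := by
  have := length_fM η; intro h; rw [h] at this; simp at this

lemma fM_concat (η : List ℕ) (m : ℕ) :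
    fM (η ++ [m]) = (fM η).dropLast ++ [2 * lastEntry η, 2 * m + 1] := by
  rcases η.eq_nil_or_concat with rfl | ⟨η', t, rfl⟩
  · simp [fM, fMaux, lastEntry]
  · rw [List.concat_eq_append, fM, fM, List.reverse_append, List.reverse_append]
    simp only [List.reverse_singleton, List.singleton_append, List.cons_append,
      List.nil_append]
    rw [lastEntry_concat]
    rfl

lemma lastEntry_fM (η : List ℕ) : lastEntry (fM η) = 2 * lastEntry η + 1 := by
  rcases η.eq_nil_or_concat with rfl | ⟨η', t, rfl⟩
  · simp [fM, fMaux, lastEntry]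
  · rw [List.concat_eq_append, fM_concat, lastEntry]
    simp [lastEntry_concat]


lemma fM_dropLast_concat (η : List ℕ) (j : ℕ) :
    (fM (η ++ [j])).dropLast = (fM η).dropLast ++ [2 * lastEntry η] := by
  rw [fM_concat]
  rw [show (2 * lastEntry η) :: [2 * j + 1] = [2 * lastEntry η] ++ [2 * j + 1] from rfl,
    ← List.append_assoc, List.dropLast_concat]

lemma fM_dropLast_eq {η : List ℕ} (h : η ≠ []) (j : ℕ) :
    (fM η).dropLast = (fM (η.dropLast ++ [j])).dropLast := by
  conv_lhs => rw [self_eq_dropLast_concat h]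
  rw [fM_dropLast_concat, fM_dropLast_concat]

lemma fM_dropLast_prefix {ρ σ : List ℕ} (h : ρ <+: σ) :
    (fM ρ).dropLast <+: (fM σ).dropLast := by
  obtain ⟨τ, rfl⟩ := h
  induction τ using List.reverseRecOn with
  | nil => simp
  | append_singleton τ' m ih =>
    rw [← List.append_assoc, fM_dropLast_concat]
    exact ih.trans (List.prefix_append _ _)

lemma fM_left_aux {ρ ν : List ℕ} (h : ListPPre ρ ν) :
    ListPPre ((fM ρ).dropLast ++ [2 * lastEntry ρ]) (fM ν) := by
  obtain ⟨τ, rfl⟩ := h.1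
  rcases τ with _ | ⟨m, τ'⟩
  · exact absurd (by simp) h.2
  have hp : ρ ++ [m] <+: ρ ++ m :: τ' := by
    rw [show ρ ++ m :: τ' = (ρ ++ [m]) ++ τ' by simp]
    exact List.prefix_append _ _
  have h1 := fM_dropLast_prefix hp
  rw [fM_dropLast_concat] at h1
  refine ⟨h1.trans (List.dropLast_prefix _), fun he => ?_⟩
  have hl := congrArg List.length he
  simp [length_fM] at hl

lemma sleft_fM {η ν : List ℕ} (hη : η ≠ []) (h : LeftStep η ν) :
    SLeftStep (fM η) (fM ν) := by
  obtain ⟨j, hj, hp⟩ := h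
  refine ⟨2 * j, by rw [lastEntry_fM]; omega, ?_⟩
  have h1 := fM_left_aux hp
  rwa [lastEntry_concat, ← fM_dropLast_eq hη j] at h1

lemma right_fM {η ν : List ℕ} (hη : η ≠ []) (h : RightStep η ν) :
    SibStep (fM η) (fM ν) ∨ SRightStep (fM η) (fM ν) := by
  obtain ⟨j, hj, hp⟩ := h
  by_cases he : η.dropLast ++ [j] = ν
  · left
    refine ⟨2 * j + 1, by rw [lastEntry_fM]; omega, ?_⟩
    subst he
    conv_lhs => rw [self_eq_dropLast_concat (fM_ne_nil _), lastEntry_fM, lastEntry_concat]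
    rw [← fM_dropLast_eq hη j]
  · right
    refine ⟨2 * j, by rw [lastEntry_fM]; omega, ?_⟩
    have h1 := fM_left_aux ⟨hp, he⟩
    rwa [lastEntry_concat, ← fM_dropLast_eq hη j] at h1

-- composition lemmas
lemma sib_trans {η ν ν' : List ℕ} (h : SibStep η ν) (h' : SibStep ν ν') : SibStep η ν' := by
  obtain ⟨j, hj, rfl⟩ := h
  obtain ⟨j', hj', rfl⟩ := h'
  rw [lastEntry_concat] at hj'
  exact ⟨j', by omega, by rw [List.dropLast_concat]⟩

lemma sib_sright {η ν ν' : List ℕ} (h : SibStep η ν) (h' : SRightStep ν ν') :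
    SRightStep η ν' := by
  obtain ⟨j, hj, rfl⟩ := h
  obtain ⟨j', hj', hp⟩ := h'
  rw [lastEntry_concat] at hj'
  rw [List.dropLast_concat] at hp
  exact ⟨j', by omega, hp⟩

lemma sright_sib {η ν ν' : List ℕ} (h : SRightStep η ν) (h' : SibStep ν ν') :
    SRightStep η ν' := by
  obtain ⟨j, hj, hp⟩ := h
  obtain ⟨j', hj', rfl⟩ := h'
  have h1 : η.dropLast ++ [j] <+: ν.dropLast := ppre_dropLast hp
  refine ⟨j, hj, h1.trans (List.prefix_append _ _), fun he => ?_⟩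
  have hl := congrArg List.length he
  have h2 := h1.length_le
  simp at hl h2
  omega

lemma sright_sright {η ν ν' : List ℕ} (h : SRightStep η ν) (h' : SRightStep ν ν') :
    SRightStep η ν' := by
  obtain ⟨j, hj, hp⟩ := h
  obtain ⟨j', hj', hp'⟩ := h'
  have h1 : η.dropLast ++ [j] <+: ν.dropLast := ppre_dropLast hp
  refine ⟨j, hj, (h1.trans (List.prefix_append _ _)).trans hp'.1, fun he => ?_⟩
  have hl := congrArg List.length he
  have h2 := h1.length_le
  have h3 := ppre_length hp'
  simp at hl h2 h3
  omega

lemma sleft_trans {η ν ν' : List ℕ} (h : SLeftStep η ν) (h' : SLeftStep ν ν') :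
    SLeftStep η ν' := by
  obtain ⟨j, hj, hp⟩ := h
  obtain ⟨j', hj', hp'⟩ := h'
  have h1 : η.dropLast ++ [j] <+: ν.dropLast := ppre_dropLast hp
  refine ⟨j, hj, (h1.trans (List.prefix_append _ _)).trans hp'.1, fun he => ?_⟩
  have hl := congrArg List.length he
  have h2 := h1.length_le
  have h3 := ppre_length hp'
  simp at hl h2 h3
  omega

lemma right_trans {η ν ν' : List ℕ} (h : RightStep η ν) (h' : RightStep ν ν') :
    RightStep η ν' := by
  obtain ⟨j, hj, hp⟩ := h
  obtain ⟨j', hj', hp'⟩ := h'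
  by_cases he : η.dropLast ++ [j] = ν
  · subst he
    rw [lastEntry_concat] at hj'
    rw [List.dropLast_concat] at hp'
    exact ⟨j', by omega, hp'⟩
  · have h1 : η.dropLast ++ [j] <+: ν.dropLast := ppre_dropLast ⟨hp, he⟩
    exact ⟨j, hj, (h1.trans (List.prefix_append _ _)).trans hp'⟩

-- ne lemmas
lemma sib_ne {η ν : List ℕ} (h : SibStep η ν) : η ≠ ν := by
  obtain ⟨j, hj, rfl⟩ := h
  intro he
  have := congrArg lastEntry he
  rw [lastEntry_concat] at this
  omega

lemma sright_ne {η ν : List ℕ} (h : SRightStep η ν) : η ≠ ν := by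
  obtain ⟨j, hj, hp⟩ := h
  intro he
  subst he
  have h1 := ppre_length hp
  have h2 := length_le_dropLast_succ η
  simp at h1
  omega

lemma sleft_ne {η ν : List ℕ} (h : SLeftStep η ν) : η ≠ ν := by
  obtain ⟨j, hj, hp⟩ := h
  intro he
  subst he
  have h1 := ppre_length hp
  have h2 := length_le_dropLast_succ η
  simp at h1
  omega

lemma right_ne {η ν : List ℕ} (h : RightStep η ν) : η ≠ ν := by
  obtain ⟨j, hj, hp⟩ := h
  intro he
  subst he
  have h1 := hp.length_le
  have h2 := length_le_dropLast_succ η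
  simp at h1
  have h3 : η.dropLast ++ [j] = η := hp.eq_of_length (by simp; omega)
  have := congrArg lastEntry h3
  rw [lastEntry_concat] at this
  omega


/-- Auxiliary: the step `l → l+1` of the chain `ξ` (within length `q`) is a strict right
step. -/
def rstep (ξ : ℕ → List ℕ) (q l : ℕ) : Prop := l + 1 < q ∧ SRightStep (ξ l) (ξ (l + 1))

open Classical in
/-- Number of strict right steps among the first `i` steps of `ξ`. -/
noncomputable def ccount (ξ : ℕ → List ℕ) (q i : ℕ) : ℕ :=
  ((Finset.range i).filter (rstep ξ q)).card

open Classical in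
lemma ccount_mono (ξ : ℕ → List ℕ) (q : ℕ) : Monotone (ccount ξ q) := fun i j hij => by
  classical
  exact Finset.card_le_card (Finset.filter_subset_filter _ (Finset.range_subset_range.2 hij))

lemma ccount_zero (ξ : ℕ → List ℕ) (q : ℕ) : ccount ξ q 0 = 0 := by simp [ccount]

open Classical in
lemma ccount_succ_pos (ξ : ℕ → List ℕ) (q i : ℕ) (h : rstep ξ q i) :
    ccount ξ q (i + 1) = ccount ξ q i + 1 := by
  classical
  rw [ccount, ccount, Finset.range_add_one, Finset.filter_insert, if_pos h,
    Finset.card_insert_of_notMem (by simp)]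

open Classical in
lemma ccount_succ_neg (ξ : ℕ → List ℕ) (q i : ℕ) (h : ¬ rstep ξ q i) :
    ccount ξ q (i + 1) = ccount ξ q i := by
  classical
  rw [ccount, ccount, Finset.range_add_one, Finset.filter_insert, if_neg h]

lemma ccount_succ_le (ξ : ℕ → List ℕ) (q i : ℕ) :
    ccount ξ q (i + 1) ≤ ccount ξ q i + 1 := by
  by_cases h : rstep ξ q i
  · rw [ccount_succ_pos ξ q i h]
  · rw [ccount_succ_neg ξ q i h]; omega

lemma chain_comp (ξ : ℕ → List ℕ) (q : ℕ)
    (hstep : ∀ l, l + 1 < q → SibStep (ξ l) (ξ (l + 1)) ∨ SRightStep (ξ l) (ξ (l + 1))) :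
    ∀ d l, 0 < d → l + d < q →
      (ccount ξ q l = ccount ξ q (l + d) → SibStep (ξ l) (ξ (l + d))) ∧
      (ccount ξ q l < ccount ξ q (l + d) → SRightStep (ξ l) (ξ (l + d))) := by
  intro d
  induction d with
  | zero => intro l h0; omega
  | succ d ih =>
    intro l _ hlt
    have hee : l + (d + 1) = l + d + 1 := by omega
    rw [hee] at hlt ⊢
    have hbase : ∀ l', l' + 1 < q →
        (ccount ξ q l' = ccount ξ q (l' + 1) → SibStep (ξ l') (ξ (l' + 1))) ∧
        (ccount ξ q l' < ccount ξ q (l' + 1) → SRightStep (ξ l') (ξ (l' + 1))) := by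
      intro l' hl'
      by_cases hr : rstep ξ q l'
      · have := ccount_succ_pos ξ q l' hr
        exact ⟨fun h => by omega, fun _ => hr.2⟩
      · have hcc := ccount_succ_neg ξ q l' hr
        have hsib : SibStep (ξ l') (ξ (l' + 1)) := by
          rcases hstep l' hl' with h | h
          · exact h
          · exact absurd ⟨hl', h⟩ hr
        exact ⟨fun _ => hsib, fun h => by omega⟩
    rcases Nat.eq_zero_or_pos d with rfl | hd
    · exact hbase l hlt
    · have ih' := ih l hd (by omega)
      have hb := hbase (l + d) (by omega)
      have m1 : ccount ξ q l ≤ ccount ξ q (l + d) := ccount_mono ξ q (by omega)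
      have m2 : ccount ξ q (l + d) ≤ ccount ξ q (l + d + 1) := ccount_mono ξ q (by omega)
      constructor
      · intro h
        exact sib_trans (ih'.1 (by omega)) (hb.1 (by omega))
      · intro h
        rcases lt_or_eq_of_le m1 with h1 | h1
        · rcases lt_or_eq_of_le m2 with h2 | h2
          · exact sright_sright (ih'.2 h1) (hb.2 h2)
          · exact sright_sib (ih'.2 h1) (hb.1 h2)
        · exact sib_sright (ih'.1 h1) (hb.2 (by omega))


lemma chain_pair (ξ : ℕ → List ℕ) (q : ℕ)
    (hstep : ∀ l, l + 1 < q → SibStep (ξ l) (ξ (l + 1)) ∨ SRightStep (ξ l) (ξ (l + 1))) :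
    ∀ i j, i < j → j < q →
      (ccount ξ q i = ccount ξ q j → SibStep (ξ i) (ξ j)) ∧
      (ccount ξ q i < ccount ξ q j → SRightStep (ξ i) (ξ j)) := by
  intro i j hij hj
  have h := chain_comp ξ q hstep (j - i) i (by omega) (by omega)
  rwa [Nat.add_sub_cancel' hij.le] at h

lemma core_extract (k : ℕ) (hk : 1 ≤ k) (ξ : ℕ → List ℕ)
    (hstep : ∀ l, l + 1 < k * k →
      SibStep (ξ l) (ξ (l + 1)) ∨ SRightStep (ξ l) (ξ (l + 1))) :
    ∃ e : Fin k → List ℕ, Function.Injective e ∧ (∀ m, ∃ l < k * k, e m = ξ l) ∧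
      ((∀ (i : ℕ) (h : i + 1 < k), SibStep (e ⟨i, Nat.lt_of_succ_lt h⟩) (e ⟨i + 1, h⟩)) ∨
       (∀ (i : ℕ) (h : i + 1 < k), SRightStep (e ⟨i, Nat.lt_of_succ_lt h⟩) (e ⟨i + 1, h⟩))) := by
  classical
  set q := k * k with hq
  have hq1 : 1 ≤ q := Nat.one_le_iff_ne_zero.2 (by positivity)
  have pair := chain_pair ξ q hstep
  by_cases hcase : k ≤ ccount ξ q (q - 1) + 1
  · -- many right steps: extract a strict right-veering chain
    set c := ccount ξ q with hc
    set i : ℕ → ℕ := fun l => sInf {i | l ≤ c i} with hi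
    have hne : ∀ l, l ≤ c (q - 1) → i l ≤ q - 1 := fun l hl => Nat.sInf_le hl
    have heq : ∀ l, l ≤ c (q - 1) → c (i l) = l := by
      intro l hl
      have hmem : l ≤ c (i l) := Nat.sInf_mem (⟨q - 1, hl⟩ : {i | l ≤ c i}.Nonempty)
      rcases Nat.eq_zero_or_pos (i l) with h0 | h0
      · have : c 0 = 0 := ccount_zero ξ q
        rw [h0] at hmem ⊢
        omega
      · have hnm : i l - 1 ∉ {i | l ≤ c i} := Nat.notMem_of_lt_sInf (show i l - 1 < i l by omega)
        simp only [Set.mem_setOf_eq, not_le] at hnm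
        have hle : c (i l - 1 + 1) ≤ c (i l - 1) + 1 := ccount_succ_le ξ q _
        have : i l - 1 + 1 = i l := by omega
        rw [this] at hle
        omega
    have hmono : ∀ l l', l < l' → l' ≤ c (q - 1) → i l < i l' := by
      intro l l' hll hl'
      have h1 : i l ≤ i l' := Nat.sInf_le (by
        have := heq l' hl'
        simp only [Set.mem_setOf_eq]
        omega)
      have h2 := heq l (hll.le.trans hl')
      have h3 := heq l' hl'
      rcases eq_or_lt_of_le h1 with h | h
      · rw [h, h3] at h2; omega
      · exact h
    have hklc : k - 1 ≤ c (q - 1) := by omega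
    refine ⟨fun m => ξ (i m), ?_, ?_, Or.inr ?_⟩
    · intro m m' hmm
      rcases lt_trichotomy m m' with h | h | h
      · have hsr := (pair (i m) (i m') (hmono _ _ (Fin.lt_iff_val_lt_val.1 h) (by omega))
          (by have := hne (m' : ℕ) (by omega); omega)).2 (by
            rw [heq _ (by omega), heq _ (by omega)]
            exact Fin.lt_iff_val_lt_val.1 h)
        exact absurd hmm (sright_ne hsr)
      · exact h
      · have hsr := (pair (i m') (i m) (hmono _ _ (Fin.lt_iff_val_lt_val.1 h) (by omega))
          (by have := hne (m : ℕ) (by omega); omega)).2 (by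
            rw [heq _ (by omega), heq _ (by omega)]
            exact Fin.lt_iff_val_lt_val.1 h)
        exact absurd hmm.symm (sright_ne hsr)
    · intro m
      exact ⟨i m, by have := hne (m : ℕ) (by omega); omega, rfl⟩
    · intro l hl
      simp only
      exact (pair (i l) (i (l + 1)) (hmono l (l + 1) (by omega) (by omega))
        (by have := hne (l + 1) (by omega); omega)).2 (by
          rw [heq _ (by omega), heq _ (by omega)]; omega)
  · -- few right steps: extract a sibling chain by pigeonhole
    have hk2 : 2 ≤ k := by
      rcases Nat.lt_or_ge k 2 with h | h
      · exact absurd (by omega) hcase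
      · exact h
    have hmaps : ∀ a ∈ Finset.range q, ccount ξ q a ∈ Finset.range (ccount ξ q (q - 1) + 1) := by
      intro a ha
      simp only [Finset.mem_range] at ha ⊢
      have := ccount_mono ξ q (show a ≤ q - 1 by omega)
      omega
    have hcard : (Finset.range (ccount ξ q (q - 1) + 1)).card * k ≤ (Finset.range q).card := by
      simp only [Finset.card_range]
      calc (ccount ξ q (q - 1) + 1) * k ≤ (k - 1) * k :=
            Nat.mul_le_mul_right _ (by omega)
        _ ≤ k * k := Nat.mul_le_mul_right _ (by omega)
    obtain ⟨v, hv, hfib⟩ :=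
      Finset.exists_le_card_fiber_of_mul_le_card_of_maps_to hmaps ⟨0, by simp⟩ hcard
    obtain ⟨F', hF'sub, hF'card⟩ := Finset.exists_subset_card_eq hfib
    have hF' : ∀ x ∈ F', x < q ∧ ccount ξ q x = v := by
      intro x hx
      have := hF'sub hx
      simp only [Finset.mem_filter, Finset.mem_range] at this
      exact this
    set iso := F'.orderIsoOfFin hF'card with hiso
    have hisomono : ∀ m m' : Fin k, m < m' → ((iso m : ℕ)) < ((iso m' : ℕ)) := by
      intro m m' h
      exact_mod_cast iso.strictMono h
    refine ⟨fun m => ξ ((iso m : ℕ)), ?_, ?_, Or.inl ?_⟩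
    · intro m m' hmm
      rcases lt_trichotomy m m' with h | h | h
      · have hsib := (pair _ _ (hisomono _ _ h) (hF' _ (iso m').2).1).1 (by
          rw [(hF' _ (iso m).2).2, (hF' _ (iso m').2).2])
        exact absurd hmm (sib_ne hsib)
      · exact h
      · have hsib := (pair _ _ (hisomono _ _ h) (hF' _ (iso m).2).1).1 (by
          rw [(hF' _ (iso m).2).2, (hF' _ (iso m').2).2])
        exact absurd hmm.symm (sib_ne hsib)
    · intro m
      exact ⟨(iso m : ℕ), (hF' _ (iso m).2).1, rfl⟩
    · intro l hl
      simp only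
      exact (pair _ _ (hisomono ⟨l, Nat.lt_of_succ_lt hl⟩ ⟨l + 1, hl⟩ (by simp [Fin.lt_iff_val_lt_val]))
        (hF' _ (iso ⟨l + 1, hl⟩).2).1).1 (by
          rw [(hF' _ (iso _).2).2, (hF' _ (iso _).2).2])


lemma pairwise_fin {A : Type*} (R : A → A → Prop)
    (htr : ∀ a b c, R a b → R b c → R a c) (N : ℕ) (e : Fin N → A)
    (h : ∀ (i : ℕ) (hi : i + 1 < N), R (e ⟨i, Nat.lt_of_succ_lt hi⟩) (e ⟨i + 1, hi⟩)) :
    ∀ i j : Fin N, i < j → R (e i) (e j) := by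
  have key : ∀ j (hj : j < N) i (hij : i < j), R (e ⟨i, by omega⟩) (e ⟨j, hj⟩) := by
    intro j
    induction j with
    | zero => omega
    | succ j ih =>
      intro hj i hij
      rcases Nat.lt_or_ge i j with h' | h'
      · exact htr _ _ _ (ih (by omega) i h') (h j hj)
      · have hii : i = j := by omega
        subst hii
        exact h i hj
  intro i j hij
  have := key (j : ℕ) j.isLt (i : ℕ) hij
  simpa using this

lemma pairwise_nat {A : Type*} (R : A → A → Prop)
    (htr : ∀ a b c, R a b → R b c → R a c) (e : ℕ → A)
    (h : ∀ i, R (e i) (e (i + 1))) :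
    ∀ i j : ℕ, i < j → R (e i) (e j) := by
  intro i j
  induction j with
  | zero => omega
  | succ j ih =>
    intro hij
    rcases Nat.lt_or_ge i j with h' | h'
    · exact htr _ _ _ (ih h') (h j)
    · have hii : i = j := by omega
      subst hii
      exact h i

lemma exists_chain {ι : Type*} [LinearOrder ι] (e : ι → List ℕ)
    (he : Function.Injective e) (S : Finset (List ℕ)) (hS : ↑S ⊆ Set.range e)
    (q : ℕ) (hq : S.card = q) :
    ∃ (ξ : Fin q → List ℕ) (g : Fin q → ι), StrictMono g ∧ (∀ l, ξ l = e (g l)) ∧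
      Function.Injective ξ ∧ Set.range ξ = ↑S := by
  classical
  set J := S.preimage e he.injOn with hJ
  have hJim : J.image e = S := by
    rw [hJ, Finset.image_preimage]
    exact Finset.filter_true_of_mem fun x hx => hS hx
  have hJcard : J.card = q := by
    rw [← hq, ← hJim, Finset.card_image_of_injOn he.injOn]
  set iso := J.orderIsoOfFin hJcard with hiso
  refine ⟨fun l => e (iso l : ι), fun l => (iso l : ι), ?_, fun l => rfl, ?_, ?_⟩
  · intro a b hab
    exact_mod_cast iso.strictMono hab
  · intro a b hab
    exact iso.injective (Subtype.ext (he hab))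
  · ext x
    constructor
    · rintro ⟨l, rfl⟩
      rw [← hJim]
      exact_mod_cast Finset.mem_image_of_mem e (iso l).2
    · intro hx
      rw [← hJim] at hx
      obtain ⟨i, hi, rfl⟩ := Finset.mem_image.1 (by exact_mod_cast hx)
      obtain ⟨l, hl⟩ := iso.surjective ⟨i, hi⟩
      exact ⟨l, by simp only [hl]⟩



lemma stepEnum_mono {A : Type y} {S S' : A → A → Prop} (h : ∀ a b, S a b → S' a b)
    {X : Set A} : StepEnum S X → StepEnum S' X := by
  rintro (⟨N, e, h1, h2, h3⟩ | ⟨e, h1, h2, h3⟩)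
  · exact Or.inl ⟨N, e, h1, h2, fun i hi => h _ _ (h3 i hi)⟩
  · exact Or.inr ⟨e, h1, h2, fun i => h _ _ (h3 i)⟩

lemma realizes_mono {M : Type w} [L.Structure M] {n m : ℕ}
    {φ : L.Formula (Fin n ⊕ Fin m)} {ι : Type y} {a : ι → Fin m → M} {X Y : Set ι}
    (hXY : X ⊆ Y) (h : Realizes φ a Y) : Realizes φ a X := by
  obtain ⟨E, xv, h⟩ := h
  exact ⟨E, xv, fun η hη => h η (hXY hη)⟩

lemma realizes_comp {M : Type w} [L.Structure M] {n m : ℕ}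
    (φ : L.Formula (Fin n ⊕ Fin m)) (a : List ℕ → Fin m → M) (f : List ℕ → List ℕ)
    (X : Set (List ℕ)) :
    Realizes φ (fun η => a (f η)) X ↔ Realizes φ a (f '' X) := by
  constructor
  · rintro ⟨E, xv, h⟩
    refine ⟨E, xv, fun ρ hρ => ?_⟩
    obtain ⟨η, hη, rfl⟩ := hρ
    exact h η hη
  · rintro ⟨E, xv, h⟩
    exact ⟨E, xv, fun η hη => h (f η) ⟨η, hη, rfl⟩⟩

lemma extract_Y {ι : Type*} [LinearOrder ι] (k : ℕ) (hk : 1 ≤ k) (e : ι → List ℕ)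
    (hinj : Function.Injective e) (X : Set (List ℕ)) (hnil : [] ∉ X)
    (hrange : Set.range e = X) (hpw : ∀ i j : ι, i < j → RightStep (e i) (e j))
    (S : Finset (List ℕ)) (hSX : ↑S ⊆ X) (hcard : S.card = k * k) :
    ∃ Y : Finset (List ℕ), Y.card = k ∧ ↑Y ⊆ fM '' ↑S ∧
      (IsSibSet (↑Y : Set (List ℕ)) ∨ IsSRightVeering (↑Y : Set (List ℕ))) := by
  classical
  obtain ⟨ξ, g, hg, hξg, hξinj, hξrange⟩ :=
    exists_chain e hinj S (by rw [hrange]; exact hSX) (k * k) hcard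
  have hξX : ∀ l, ξ l ∈ X := fun l => hSX (by rw [← hξrange]; exact Set.mem_range_self l)
  set ζ : ℕ → List ℕ := fun l => if h : l < k * k then fM (ξ ⟨l, h⟩) else [] with hζ
  have hζsteps : ∀ l, l + 1 < k * k →
      SibStep (ζ l) (ζ (l + 1)) ∨ SRightStep (ζ l) (ζ (l + 1)) := by
    intro l hl
    have h1 : l < k * k := Nat.lt_of_succ_lt hl
    simp only [hζ, dif_pos hl, dif_pos h1]
    refine right_fM (fun h => hnil (h ▸ hξX ⟨l, h1⟩)) ?_
    rw [hξg, hξg]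
    exact hpw _ _ (hg (Fin.mk_lt_mk.2 (by omega)))
  obtain ⟨e', hinj', hmem', hsteps'⟩ := core_extract k hk ζ hζsteps
  refine ⟨Finset.image e' Finset.univ, ?_, ?_, ?_⟩
  · rw [Finset.card_image_of_injective _ hinj', Finset.card_univ, Fintype.card_fin]
  · intro x hx
    simp only [Finset.coe_image, Finset.coe_univ, Set.image_univ] at hx
    obtain ⟨mm, rfl⟩ := hx
    obtain ⟨l, hl, hel⟩ := hmem' mm
    rw [hel]
    simp only [hζ, dif_pos hl]
    exact ⟨ξ ⟨l, hl⟩, by rw [← hξrange]; exact Set.mem_range_self _, rfl⟩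
  · have hrangeE : Set.range e' = ↑(Finset.image e' Finset.univ) := by
      simp [Finset.coe_image]
    have hnilY : [] ∉ (↑(Finset.image e' Finset.univ) : Set (List ℕ)) := by
      rw [← hrangeE]
      rintro ⟨mm, hmm⟩
      obtain ⟨l, hl, hel⟩ := hmem' mm
      have hzl : ζ l ≠ [] := by
        simp only [hζ, dif_pos hl]
        exact fM_ne_nil _
      exact hzl (by rw [← hel, hmm])
    rcases hsteps' with hs | hs
    · exact Or.inl ⟨hnilY, Or.inl ⟨k, e', hinj', hrangeE, hs⟩⟩
    · exact Or.inr ⟨hnilY, Or.inl ⟨k, e', hinj', hrangeE, hs⟩⟩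

/-- `T` has BTP iff there are `φ(x,y)`, a family `(a_η)_{η ∈ ω^{<ω}}` in a
model of `T` and `k < ω` such that `{φ(x,a_η)}_{η ∈ X}` is consistent for every strict
left-leaning path, `k`-inconsistent for every strict right-veering path, and
`k`-inconsistent for every direct sibling set. -/
theorem statement_3 {L : FirstOrder.Language.{u, v}} (T : L.Theory) (hT : T.IsComplete) :
    HasBTP T ↔
      ∃ (M : Theory.ModelType.{u, v, max u v} T) (n m : ℕ) (φ : L.Formula (Fin n ⊕ Fin m))
        (a : List ℕ → Fin m → M) (k : ℕ),
        (∀ X : Set (List ℕ), IsSLeftLeaning X → Realizes φ a X) ∧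
        (∀ X : Set (List ℕ), IsSRightVeering X → KIncon φ a X k) ∧
        (∀ X : Set (List ℕ), IsSibSet X → KIncon φ a X k) := by
  constructor
  · rintro ⟨M, n, m, φ, a, k, h1, h2⟩
    refine ⟨M, n, m, φ, a, k, ?_, ?_, ?_⟩
    · intro X hX
      exact h1 X ⟨hX.1, stepEnum_mono
        (fun η ν hs => hs.elim fun j hj => ⟨j, hj.1.le, hj.2⟩) hX.2⟩
    · intro X hX
      exact h2 X ⟨hX.1, stepEnum_mono
        (fun η ν hs => hs.elim fun j hj => ⟨j, hj.1, hj.2.1⟩) hX.2⟩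
    · intro X hX
      exact h2 X ⟨hX.1, stepEnum_mono
        (fun η ν hs => hs.elim fun j hj => ⟨j, hj.1, by rw [hj.2]⟩) hX.2⟩
  · rintro ⟨M, n, m, φ, a, k, hcon, hsr, hsib⟩
    have hreal_empty : Realizes φ a (∅ : Set (List ℕ)) :=
      ⟨⟨M, inferInstance, FirstOrder.Language.ElementaryEmbedding.refl L M⟩,
        fun _ => Classical.arbitrary M, fun η hη => absurd hη (Set.notMem_empty η)⟩
    rcases Nat.eq_zero_or_pos k with rfl | hk
    · exfalso
      refine hsib ∅ ⟨Set.notMem_empty _, Or.inl ⟨0, Fin.elim0, fun x => x.elim0, by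
        simp, fun i h => by omega⟩⟩ ∅ (by simp) rfl ?_
      rw [Finset.coe_empty]
      exact hreal_empty
    refine ⟨M, n, m, φ, fun η => a (fM η), k * k, ?_, ?_⟩
    · rintro X ⟨hnil, henum⟩
      rw [realizes_comp]
      apply hcon
      have hnil' : [] ∉ fM '' X := by
        rintro ⟨η, -, hη⟩
        exact fM_ne_nil η hη
      refine ⟨hnil', ?_⟩
      rcases henum with ⟨N, e, hinj, hrange, hsteps⟩ | ⟨e, hinj, hrange, hsteps⟩
      · left
        have hne : ∀ i : Fin N, e i ≠ [] := fun i h =>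
          hnil (by rw [← hrange]; exact ⟨i, h⟩)
        have hsteps' : ∀ (i : ℕ) (hi : i + 1 < N),
            SLeftStep (fM (e ⟨i, Nat.lt_of_succ_lt hi⟩)) (fM (e ⟨i + 1, hi⟩)) :=
          fun i hi => sleft_fM (hne _) (hsteps i hi)
        have hpw := pairwise_fin SLeftStep (fun _ _ _ => sleft_trans) N
          (fun i => fM (e i)) hsteps'
        refine ⟨N, fun i => fM (e i), ?_, ?_, hsteps'⟩
        · intro i j hij
          by_contra hne'
          rcases Ne.lt_or_gt hne' with h | h
          · exact sleft_ne (hpw _ _ h) hij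
          · exact sleft_ne (hpw _ _ h) hij.symm
        · rw [show (fun i => fM (e i)) = fM ∘ e from rfl, Set.range_comp, hrange]
      · right
        have hne : ∀ i : ℕ, e i ≠ [] := fun i h =>
          hnil (by rw [← hrange]; exact ⟨i, h⟩)
        have hsteps' : ∀ i : ℕ, SLeftStep (fM (e i)) (fM (e (i + 1))) :=
          fun i => sleft_fM (hne _) (hsteps i)
        have hpw := pairwise_nat SLeftStep (fun _ _ _ => sleft_trans)
          (fun i => fM (e i)) hsteps'
        refine ⟨fun i => fM (e i), ?_, ?_, hsteps'⟩
        · intro i j hij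
          by_contra hne'
          rcases Ne.lt_or_gt hne' with h | h
          · exact sleft_ne (hpw _ _ h) hij
          · exact sleft_ne (hpw _ _ h) hij.symm
        · rw [show (fun i => fM (e i)) = fM ∘ e from rfl, Set.range_comp, hrange]
    · rintro X ⟨hnil, henum⟩ S hSX hcard hreal
      rw [realizes_comp] at hreal
      have hY : ∃ Y : Finset (List ℕ), Y.card = k ∧ ↑Y ⊆ fM '' ↑S ∧
          (IsSibSet (↑Y : Set (List ℕ)) ∨ IsSRightVeering (↑Y : Set (List ℕ))) := by
        rcases henum with ⟨N, e, hinj, hrange, hsteps⟩ | ⟨e, hinj, hrange, hsteps⟩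
        · exact extract_Y k hk e hinj X hnil hrange
            (pairwise_fin RightStep (fun _ _ _ => right_trans) N e hsteps) S hSX hcard
        · exact extract_Y k hk e hinj X hnil hrange
            (pairwise_nat RightStep (fun _ _ _ => right_trans) e hsteps) S hSX hcard
      obtain ⟨Y, hYcard, hYsub, hYkind⟩ := hY
      have hYreal : Realizes φ a ↑Y := realizes_mono hYsub hreal
      rcases hYkind with hY' | hY'
      · exact hsib ↑Y hY' Y Set.Subset.rfl hYcard hYreal
      · exact hsr ↑Y hY' Y Set.Subset.rfl hYcard hYreal


end Paper
end

section
/- Let κ be an infinite cardinal and let f : ω^{<κ} → ω^{<κ} be a map such that for all η, η' ∈ ω^{<κ}: η ⊴ η' if and only if f(η) ⊴ f(η'); η <_lex η' if and only if f(η) <_lex f(η'); and f(η) ∧ f(η') ⊵ f(η ∧ η'). Then the image under f of any descending comb in ω^{<κ} is a descending comb, and the image under f of any path (set linearly ordered by ⊴) is a path. -/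
/-! Common definitions: trees, tree languages, generalized indiscernibles, tree properties,
and Mekler's construction, following "On Mekler construction of NCTP and NBTP theories". -/

open FirstOrder Language Cardinal Set

universe u v w x y

namespace Paper

variable {L : FirstOrder.Language.{u, v}}

lemma OTree.ext' {κ : Cardinal.{u}} {η ν : OTree κ} (hlen : η.len = ν.len)
    (hval : ∀ β < η.len, η.val β = ν.val β) : η = ν := by
  cases η with | mk l hl v hv =>
  cases ν with | mk l' hl' v' hv' =>
  simp only at hlen
  subst hlen
  simp only [OTree.mk.injEq, heq_eq_eq, true_and]
  funext β
  by_cases h : β < l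
  · exact hval β h
  · have h1 : v β = none := by
      rw [← Option.not_isSome_iff_eq_none, hv]; exact h
    have h2 : v' β = none := by
      rw [← Option.not_isSome_iff_eq_none, hv']; exact h
    rw [h1, h2]

lemma opre_refl {κ : Cardinal.{u}} (η : OTree κ) : OPre η η :=
  ⟨le_rfl, fun _ _ => rfl⟩

lemma opre_trans {κ : Cardinal.{u}} {η ν ξ : OTree κ} (h1 : OPre η ν) (h2 : OPre ν ξ) :
    OPre η ξ :=
  ⟨h1.1.trans h2.1, fun β hβ => (h1.2 β hβ).trans (h2.2 β (hβ.trans_le h1.1))⟩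

lemma opre_antisymm {κ : Cardinal.{u}} {η ν : OTree κ} (h1 : OPre η ν) (h2 : OPre ν η) :
    η = ν :=
  OTree.ext' (le_antisymm h1.1 h2.1) h1.2

/-- Every nonempty subset of `ω^{<κ}` has a meet. -/
lemma meet_exists {κ : Cardinal.{u}} {S : Set (OTree κ)} (hS : S.Nonempty) :
    ∃ μ : OTree κ, IsMeetSetG OPre S μ := by
  obtain ⟨η₀, hη₀⟩ := hS
  set T : Set Ordinal.{u} := {β | η₀.len ≤ β ∨ ∃ ν ∈ S, η₀.val β ≠ ν.val β} with hT
  have hTne : T.Nonempty := ⟨η₀.len, Or.inl le_rfl⟩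
  set B : Ordinal.{u} := sInf T with hB
  have hBle : B ≤ η₀.len := csInf_le' (Or.inl le_rfl)
  have hnotT : ∀ β < B, η₀.len > β ∧ ∀ ν ∈ S, η₀.val β = ν.val β := by
    intro β hβ
    have : β ∉ T := notMem_of_lt_csInf' hβ
    rw [hT, Set.mem_setOf_eq] at this
    push_neg at this
    exact ⟨this.1, this.2⟩
  refine ⟨⟨B, hBle.trans_lt η₀.len_lt, fun β => if β < B then η₀.val β else none, ?_⟩, ?_, ?_⟩
  · intro β
    by_cases h : β < B
    · simp only [if_pos h, η₀.isSome_iff]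
      exact ⟨fun _ => h, fun _ => h.trans_le hBle⟩
    · simp [h]
  · -- lower bound
    intro ν hν
    have hlen : B ≤ ν.len := by
      by_contra h
      push_neg at h
      obtain ⟨h1, h2⟩ := hnotT ν.len h
      have hs1 : (η₀.val ν.len).isSome := (η₀.isSome_iff _).mpr h1
      rw [h2 ν hν] at hs1
      rw [ν.isSome_iff] at hs1
      exact absurd hs1 (lt_irrefl _)
    refine ⟨hlen, fun β hβ => ?_⟩
    have hβB : β < B := hβ
    show (if β < B then η₀.val β else none) = ν.val β
    rw [if_pos hβB]
    exact (hnotT β hβB).2 ν hν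
  · -- greatest
    intro ξ hξ
    have hlen : ξ.len ≤ B := by
      by_contra h
      push_neg at h
      have hmem : B ∈ T := csInf_mem hTne
      rw [hT, Set.mem_setOf_eq] at hmem
      rcases hmem with h1 | ⟨ν, hν, h2⟩
      · exact absurd ((hξ η₀ hη₀).1.trans h1) (not_le.mpr h)
      · have e1 : ξ.val B = η₀.val B := (hξ η₀ hη₀).2 B h
        have e2 : ξ.val B = ν.val B := (hξ ν hν).2 B h
        exact h2 (e1.symm.trans e2)
    refine ⟨hlen, fun β hβ => ?_⟩
    have hβB : β < B := hβ.trans_le hlen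
    show ξ.val β = if β < B then η₀.val β else none
    rw [if_pos hβB]
    exact (hξ η₀ hη₀).2 β hβ

lemma meet_step {κ : Cardinal.{u}} {f : OTree κ → OTree κ}
    (hpre : ∀ η η' : OTree κ, OPre η η' ↔ OPre (f η) (f η'))
    {ι : Type} {e : ι → OTree κ} {J J' : ι → Prop} (i : ι) (hi : J i)
    (hsub : ∀ j, J' j → J j) (hsplit : ∀ j, J j → j = i ∨ J' j) (hne : ∃ j, J' j)
    (hX : ∀ m m' : OTree κ, IsMeetSetG OPre {t | ∃ j, J j ∧ e j = t} m →
        IsMeetSetG OPre {t | ∃ j, J' j ∧ e j = t} m' → OPre m m' ∧ m ≠ m')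
    {μ μ' : OTree κ} (hμ : IsMeetSetG OPre {t | ∃ j, J j ∧ f (e j) = t} μ)
    (hμ' : IsMeetSetG OPre {t | ∃ j, J' j ∧ f (e j) = t} μ') :
    OPre μ μ' ∧ μ ≠ μ' := by
  obtain ⟨m, hm⟩ := meet_exists (S := {t | ∃ j, J j ∧ e j = t}) ⟨e i, i, hi, rfl⟩
  obtain ⟨j0, hj0⟩ := hne
  obtain ⟨m', hm'⟩ := meet_exists (S := {t | ∃ j, J' j ∧ e j = t}) ⟨e j0, j0, hj0, rfl⟩
  obtain ⟨hmm, hmne⟩ := hX m m' hm hm'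
  constructor
  · exact hμ'.2 μ (fun t ht => hμ.1 t (by
      obtain ⟨j, hj, rfl⟩ := ht; exact ⟨j, hsub j hj, rfl⟩))
  · intro heq
    have h1 : OPre μ (f (e i)) := hμ.1 _ ⟨i, hi, rfl⟩
    have h2 : OPre (f m') μ' := hμ'.2 _ (by
      rintro t ⟨j, hj, rfl⟩
      exact (hpre _ _).mp (hm'.1 _ ⟨j, hj, rfl⟩))
    have h3 : OPre m' (e i) := (hpre _ _).mpr (opre_trans h2 (heq ▸ h1))
    have h4 : OPre m' m := hm.2 _ (by
      rintro t ⟨j, hj, rfl⟩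
      rcases hsplit j hj with rfl | hj'
      · exact h3
      · exact hm'.1 _ ⟨j, hj', rfl⟩)
    exact hmne (opre_antisymm hmm h4)

/-- If `f : ω^{<κ} → ω^{<κ}` preserves and reflects `⊴` and `<_lex` and
satisfies `f(η) ∧ f(η') ⊵ f(η ∧ η')`, then images of descending combs are descending combs
and images of paths are paths. -/
theorem statement_8 (κ : Cardinal.{u}) (hκ : ℵ₀ ≤ κ) (f : OTree κ → OTree κ)
    (hpre : ∀ η η' : OTree κ, OPre η η' ↔ OPre (f η) (f η'))
    (hlex : ∀ η η' : OTree κ, OLex η η' ↔ OLex (f η) (f η'))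
    (hmeet : ∀ η η' : OTree κ, OPre (f (omeet η η')) (omeet (f η) (f η'))) :
    (∀ X : Set (OTree κ), IsDescCombO X → IsDescCombO (f '' X)) ∧
    (∀ X : Set (OTree κ), IsPathO X → IsPathO (f '' X)) := by
  have finj : Function.Injective f := by
    intro a b h
    exact opre_antisymm ((hpre a b).mpr (h ▸ opre_refl (f a)))
      ((hpre b a).mpr (h ▸ opre_refl (f b)))
  constructor
  · rintro X ⟨hanti, henum⟩
    constructor
    · rintro _ ⟨a, ha, rfl⟩ _ ⟨b, hb, rfl⟩ hne
      have hab : a ≠ b := fun h => hne (by rw [h])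
      obtain ⟨h1, h2⟩ := hanti a ha b hb hab
      exact ⟨fun h => h1 ((hpre a b).mpr h), fun h => h2 ((hpre b a).mpr h)⟩
    · rcases henum with ⟨n, e, einj, erange, elex, emeet⟩ | ⟨e, einj, erange, elex, emeet⟩
      · left
        refine ⟨n, f ∘ e, finj.comp einj, by rw [Set.range_comp, erange],
          fun i h => (hlex _ _).mp (elex i h), ?_⟩
        intro i hi μ μ' hμ hμ'
        exact meet_step hpre (e := e) (J := fun j : Fin n => i ≤ (j : ℕ))
          (J' := fun j : Fin n => i + 1 ≤ (j : ℕ))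
          (⟨i, Nat.lt_of_succ_lt hi⟩ : Fin n) le_rfl
          (fun j hj => le_trans (Nat.le_succ i) hj)
          (fun j hj => by
            rcases eq_or_lt_of_le hj with h | h
            · exact Or.inl (Fin.ext h.symm)
            · exact Or.inr h)
          ⟨⟨i + 1, hi⟩, le_rfl⟩ (emeet i hi) hμ hμ'
      · right
        refine ⟨f ∘ e, finj.comp einj, by rw [Set.range_comp, erange],
          fun i => (hlex _ _).mp (elex i), ?_⟩
        intro i μ μ' hμ hμ'
        exact meet_step hpre (e := e) (J := fun j : ℕ => i ≤ j)
          (J' := fun j : ℕ => i + 1 ≤ j) i le_rfl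
          (fun j hj => le_trans (Nat.le_succ i) hj)
          (fun j hj => by
            rcases eq_or_lt_of_le hj with h | h
            · exact Or.inl h.symm
            · exact Or.inr h)
          ⟨i + 1, le_rfl⟩ (emeet i) hμ hμ'
  · rintro X hX _ ⟨a, ha, rfl⟩ _ ⟨b, hb, rfl⟩
    rcases hX a ha b hb with h | h
    · exact Or.inl ((hpre a b).mp h)
    · exact Or.inr ((hpre b a).mp h)

end Paper
end
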